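/- Let E be a real inner product space, I ⊆ E a finite subset, G ⊆ I, and 𝒱 a discrete tessellation of I induced by G. Let V ∈ 𝒱 with V ∩ G = {c}. Then for every g ∈ G, the convex hull of V is contained in the dominance region of its generator: convexHull ℝ V ⊆ {x ∈ E : dist(x, c) ≤ dist(x, g)}. -/

import Mathlib

open RealInnerProductSpace

/-- A collection `𝒱` of subsets of `I` is the discrete tessellation of `I` induced by
`G ⊆ I` if: (1) distinct members are disjoint; (2) the union of the members equals `I`;
(3) every member contains exactly one element of `G` (its generator); (4) every element
of a member is at least as close to its generator as to any other element of `G`. -/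
def IsDiscreteTessellation {E : Type*} [MetricSpace E] (I G : Set E)
    (𝒱 : Set (Set E)) : Prop :=
  (∀ V ∈ 𝒱, ∀ U ∈ 𝒱, V ≠ U → V ∩ U = ∅) ∧
  ⋃₀ 𝒱 = I ∧
  (∀ V ∈ 𝒱, ∃ c, V ∩ G = {c}) ∧
  (∀ V ∈ 𝒱, ∀ c, V ∩ G = {c} → ∀ v ∈ V, ∀ k ∈ G, dist v c ≤ dist v k)

section DominanceRegion

variable {E : Type*} [NormedAddCommGroup E] [InnerProductSpace ℝ E]

theorem dist_le_dist_iff_inner_le (x c g : E) :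
    dist x c ≤ dist x g ↔ ⟪g - c, x⟫ ≤ (‖g‖ ^ 2 - ‖c‖ ^ 2) / 2 := by
  rw [← sq_le_sq₀ dist_nonneg dist_nonneg, dist_eq_norm, dist_eq_norm,
    norm_sub_sq_real, norm_sub_sq_real, inner_sub_left, real_inner_comm x g,
    real_inner_comm x c]
  constructor <;> intro h <;> linarith

theorem convex_setOf_dist_le_dist (c g : E) : Convex ℝ {x : E | dist x c ≤ dist x g} := by
  simp_rw [dist_le_dist_iff_inner_le]
  exact convex_halfSpace_le (innerₗ E (g - c)).isLinear _

end DominanceRegion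

theorem convexHull_subset_dominanceRegion_general {E : Type*} [NormedAddCommGroup E]
    [InnerProductSpace ℝ E] (I G : Set E)
    (𝒱 : Set (Set E)) (h𝒱 : IsDiscreteTessellation I G 𝒱)
    (V : Set E) (hV : V ∈ 𝒱) (c : E) (hc : V ∩ G = {c}) :
    ∀ g ∈ G, convexHull ℝ V ⊆ {x : E | dist x c ≤ dist x g} := by
  intro g hg
  have hV_dominated : V ⊆ {x : E | dist x c ≤ dist x g} :=
    fun v hv => h𝒱.2.2.2 V hV c hc v hv g hg
  exact convexHull_min hV_dominated (convex_setOf_dist_le_dist c g)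

/-- The convex hull of a zone of a discrete tessellation is contained in the dominance
region of its generator `c` with respect to any generator `g ∈ G`. -/
theorem convexHull_subset_dominanceRegion {E : Type*} [NormedAddCommGroup E]
    [InnerProductSpace ℝ E] (I G : Set E) (hIfin : I.Finite) (hGI : G ⊆ I)
    (𝒱 : Set (Set E)) (h𝒱 : IsDiscreteTessellation I G 𝒱)
    (V : Set E) (hV : V ∈ 𝒱) (c : E) (hc : V ∩ G = {c}) :
    ∀ g ∈ G, convexHull ℝ V ⊆ {x : E | dist x c ≤ dist x g} :=
  convexHull_subset_dominanceRegion_general I G 𝒱 h𝒱 V hV c hc
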